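/- Let σ' be a nonempty finite CNN request sequence whose last request is r' = r(x',y'), let W' = W_{σ'}, let (x'',y'') ∈ ℝ², set Δx = |x'−x''| and Δy = |y'−y''|, and assume Δx ≥ Δy. Fix λ ∈ (0,1). Then the extended cost ∇ = sup_{s∈M} Sl_{W'}(s; r(x'',y'')) satisfies ∇ ≤ (1+λ)·Δx. -/

import Mathlib

/-!
Write `W = W_σ` and `W' = W_{σ r'}`. Up to `ε`, `W'(s)` is realised as `W(t) + d(t, s)` for some
`t ∈ r'`, and `W' ≤ W` on `r'`. Every point of `r'` lies within `max(Δx, Δy) = Δx` of `r''`; taking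
such a `u ∈ r''` as the competitor in the slack and using that `W'` is `1`-Lipschitz gives
`Sl_{W'}(s; r'') ≤ W'(t) + d(t,u) + λ (d(t,u) + d(t,s)) - W'(s) ≤ (1 + λ) Δx + ε`,
where `λ ≤ 1` absorbs `λ d(t,s)` into `d(t,s)`.
-/

noncomputable section

/-- The L1 metric on `ℝ²` (the CNN metric space). -/
def dL1 (p q : ℝ × ℝ) : ℝ := |p.1 - q.1| + |p.2 - q.2|

/-- The CNN request associated with a point `(x, y)`. -/
def req (p : ℝ × ℝ) : Set (ℝ × ℝ) := {q | q.1 = p.1 ∨ q.2 = p.2}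

/-- The work function of a finite CNN request sequence (requests listed in order of arrival),
starting at origin `O`. -/
noncomputable def WF (O : ℝ × ℝ) : List (ℝ × ℝ) → (ℝ × ℝ) → ℝ
  | [], s => dL1 O s
  | p :: l, s => sInf ((fun t => dL1 O t + WF t l s) '' req p)

/-- The slack of a point `s` to a nonempty set `C` with respect to `W`. -/
noncomputable def Sl (lam : ℝ) (W : ℝ × ℝ → ℝ) (s : ℝ × ℝ) (C : Set (ℝ × ℝ)) : ℝ :=
  sInf ((fun t => W t + lam * dL1 t s) '' C) - W s

lemma dL1_nonneg (p q : ℝ × ℝ) : 0 ≤ dL1 p q :=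
  add_nonneg (abs_nonneg _) (abs_nonneg _)

lemma dL1_self (p : ℝ × ℝ) : dL1 p p = 0 := by
  simp [dL1]

lemma dL1_comm (p q : ℝ × ℝ) : dL1 p q = dL1 q p := by
  simp only [dL1, abs_sub_comm]

lemma dL1_triangle (p q r : ℝ × ℝ) : dL1 p r ≤ dL1 p q + dL1 q r := by
  have h1 := abs_sub_le p.1 q.1 r.1
  have h2 := abs_sub_le p.2 q.2 r.2
  simp only [dL1]
  linarith

lemma req_nonempty (p : ℝ × ℝ) : (req p).Nonempty :=
  ⟨p, Or.inl rfl⟩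

lemma exists_mem_req_dL1_le {p t : ℝ × ℝ} (ht : t ∈ req p) (q : ℝ × ℝ) :
    ∃ u ∈ req q, dL1 t u ≤ max |p.1 - q.1| |p.2 - q.2| := by
  rcases ht with h | h
  · exact ⟨(q.1, t.2), Or.inl rfl, by simp [dL1, h]⟩
  · exact ⟨(t.1, q.2), Or.inr rfl, by simp [dL1, h]⟩

lemma sInf_image_le_sInf_image_add {α : Type*} {A : Set α} (hA : A.Nonempty) {f g : α → ℝ}
    {c : ℝ} (hf : BddBelow (f '' A)) (h : ∀ a ∈ A, f a ≤ g a + c) :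
    sInf (f '' A) ≤ sInf (g '' A) + c := by
  rw [← sub_le_iff_le_add]
  refine le_csInf (hA.image g) ?_
  rintro _ ⟨a, ha, rfl⟩
  rw [sub_le_iff_le_add]
  exact (csInf_le hf ⟨a, ha, rfl⟩).trans (h a ha)

lemma WF_nonneg (O : ℝ × ℝ) (l : List (ℝ × ℝ)) (s : ℝ × ℝ) : 0 ≤ WF O l s := by
  induction l generalizing O with
  | nil => exact dL1_nonneg _ _
  | cons p l ih =>
    refine Real.sInf_nonneg ?_
    rintro _ ⟨t, _, rfl⟩
    exact add_nonneg (dL1_nonneg _ _) (ih t)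

lemma bddBelow_WF_step (O : ℝ × ℝ) (l : List (ℝ × ℝ)) (s p : ℝ × ℝ) :
    BddBelow ((fun t => dL1 O t + WF t l s) '' req p) := by
  refine ⟨0, ?_⟩
  rintro _ ⟨t, _, rfl⟩
  exact add_nonneg (dL1_nonneg _ _) (WF_nonneg _ _ _)

lemma WF_le_WF_add_dL1 (O : ℝ × ℝ) (l : List (ℝ × ℝ)) (u v : ℝ × ℝ) :
    WF O l u ≤ WF O l v + dL1 v u := by
  induction l generalizing O with
  | nil => exact dL1_triangle O v u
  | cons p l ih =>
    refine sInf_image_le_sInf_image_add (req_nonempty p) (bddBelow_WF_step O l u p) ?_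
    intro t _
    linarith [ih t]

lemma WF_append_singleton_le (O : ℝ × ℝ) (l : List (ℝ × ℝ)) {p t : ℝ × ℝ} (ht : t ∈ req p)
    (s : ℝ × ℝ) : WF O (l ++ [p]) s ≤ WF O l t + dL1 t s := by
  induction l generalizing O with
  | nil => exact csInf_le (bddBelow_WF_step O [] s p) ⟨t, ht, rfl⟩
  | cons q l ih =>
    refine sInf_image_le_sInf_image_add (req_nonempty q) (bddBelow_WF_step O (l ++ [p]) s q) ?_
    intro u _
    simp only [List.append_eq]
    linarith [ih u]

lemma exists_mem_req_WF_add_dL1_le (O : ℝ × ℝ) (l : List (ℝ × ℝ)) (p s : ℝ × ℝ) {ε : ℝ}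
    (hε : 0 < ε) : ∃ t ∈ req p, WF O l t + dL1 t s ≤ WF O (l ++ [p]) s + ε := by
  induction l generalizing O ε with
  | nil =>
    obtain ⟨_, ⟨t, ht, rfl⟩, hlt⟩ :=
      Real.lt_sInf_add_pos ((req_nonempty p).image (fun t => dL1 O t + WF t [] s)) hε
    exact ⟨t, ht, hlt.le⟩
  | cons q l ih =>
    obtain ⟨_, ⟨u, hu, rfl⟩, hlt⟩ :=
      Real.lt_sInf_add_pos ((req_nonempty q).image (fun t => dL1 O t + WF t (l ++ [p]) s))
        (half_pos hε)
    obtain ⟨t, ht, hut⟩ := ih u (half_pos hε)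
    have hWt : WF O (q :: l) t ≤ dL1 O u + WF u l t :=
      csInf_le (bddBelow_WF_step O l t q) ⟨u, hu, rfl⟩
    refine ⟨t, ht, ?_⟩
    change _ ≤ sInf ((fun t => dL1 O t + WF t (l ++ [p]) s) '' req q) + ε
    linarith

lemma Sl_le_of_mem {lam : ℝ} (hlam : 0 ≤ lam) {W : ℝ × ℝ → ℝ} (hW : ∀ v, 0 ≤ W v)
    {C : Set (ℝ × ℝ)} {u : ℝ × ℝ} (hu : u ∈ C) (s : ℝ × ℝ) :
    Sl lam W s C ≤ W u + lam * dL1 u s - W s := by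
  have hbdd : BddBelow ((fun v => W v + lam * dL1 v s) '' C) := by
    refine ⟨0, ?_⟩
    rintro _ ⟨v, _, rfl⟩
    exact add_nonneg (hW v) (mul_nonneg hlam (dL1_nonneg _ _))
  exact sub_le_sub_right (csInf_le hbdd ⟨u, hu, rfl⟩) _

lemma Sl_WF_append_singleton_le {lam : ℝ} (h0 : 0 ≤ lam) (h1 : lam ≤ 1) (O : ℝ × ℝ)
    (l : List (ℝ × ℝ)) (p q s : ℝ × ℝ) :
    Sl lam (WF O (l ++ [p])) s (req q) ≤ (1 + lam) * max |p.1 - q.1| |p.2 - q.2| := by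
  set W := WF O (l ++ [p])
  refine le_of_forall_pos_le_add fun ε hε => ?_
  obtain ⟨t, ht, hts⟩ := exists_mem_req_WF_add_dL1_le O l p s hε
  obtain ⟨u, hu, htu⟩ := exists_mem_req_dL1_le ht q
  have hWt : W t ≤ WF O l t := by
    simpa only [dL1_self, add_zero] using WF_append_singleton_le O l ht t
  have hus : dL1 u s ≤ dL1 t u + dL1 t s := dL1_comm u t ▸ dL1_triangle u t s
  have hlam_ts : lam * dL1 t s ≤ dL1 t s := mul_le_of_le_one_left (dL1_nonneg t s) h1
  calc Sl lam W s (req q)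
      ≤ W u + lam * dL1 u s - W s := Sl_le_of_mem h0 (WF_nonneg O _) hu s
    _ ≤ (W t + dL1 t u) + lam * (dL1 t u + dL1 t s) - W s := by
        gcongr
        exact WF_le_WF_add_dL1 O _ u t
    _ ≤ (WF O l t + dL1 t s - W s) + (1 + lam) * dL1 t u := by linarith
    _ ≤ ε + (1 + lam) * max |p.1 - q.1| |p.2 - q.2| := by gcongr; linarith
    _ = _ := add_comm _ _

/-- If the last request of `σ'` is `r(x',y')` and the next request is `r(x'',y'')`, with
`Δx = |x'−x''| ≥ Δy = |y'−y''|`, then the extended cost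
`∇ = sup_s Sl_{W_{σ'}}(s; r(x'',y''))` satisfies `∇ ≤ (1+λ)·Δx`. -/
theorem extended_cost_le (lam : ℝ) (h0 : 0 < lam) (h1 : lam < 1)
    (O : ℝ × ℝ) (l : List (ℝ × ℝ)) (x' y' x'' y'' : ℝ)
    (hxy : |x' - x''| ≥ |y' - y''|) :
    sSup (Set.range fun s => Sl lam (WF O (l ++ [(x', y')])) s (req (x'', y''))) ≤
      (1 + lam) * |x' - x''| := by
  refine Real.sSup_le ?_ (mul_nonneg (by linarith) (abs_nonneg _))
  rintro _ ⟨s, rfl⟩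
  have h := Sl_WF_append_singleton_le h0.le h1.le O l (x', y') (x'', y'') s
  rwa [max_eq_left hxy] at h

end
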